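/- Let (R,m) be a one-dimensional Cohen–Macaulay local ring of minimal multiplicity (so m is stable: m² = xm for some nonzerodivisor x) and let J be a regular ideal with principal reduction (y). Then (y):J ⊇ m if and only if tr(J) ⊇ m. (Consequently, for J a canonical ideal, R is almost Gorenstein if and only if R is nearly Gorenstein.) -/

import Mathlib

/-!
Write `I = (y):J`. Every linear form `f` on `J` is multiplication by `f y / y`, and `f y ∈ I`;
conversely every `a ∈ I` gives the form `a / y`. Hence `y · tr(J) = I · J`, and the forward
implication follows by cancelling `y` from `y · m ⊆ I · J`.

For the converse, `tr(J) ⊇ m` means `tr(J) = R` or `tr(J) = m`. Raising `y · tr(J) = I · J` to the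
`n`-th power and using `y Jⁿ = Jⁿ⁺¹` gives `tr(J)ⁿ J = y tr(J)ⁿ`. If `tr(J) = R` this says `J = (y)`;
if `tr(J) = m`, stability `mˡ⁺¹ = xˡ m` lets us cancel `xⁿ⁻¹` to get `m J = y m`. Either way
`m J ⊆ (y)`, i.e. `m ⊆ I`.
-/

open nonZeroDivisors IsLocalRing

/-- The trace ideal of an `R`-module `M`. -/
noncomputable def traceIdeal (R : Type*) [CommRing R] (M : Type*) [AddCommGroup M]
    [Module R M] : Ideal R :=
  ⨆ f : M →ₗ[R] R, LinearMap.range f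

namespace Ideal

variable {R : Type*} [CommRing R]

theorem span_singleton_mul_right_mono_of_mem_nonZeroDivisors {x : R} (hx : x ∈ R⁰)
    {I J : Ideal R} : span {x} * I ≤ span {x} * J ↔ I ≤ J := by
  simp_rw [span_singleton_mul_le_span_singleton_mul, mul_cancel_left_mem_nonZeroDivisors hx,
    exists_eq_right', SetLike.le_def]

theorem span_singleton_mul_right_inj_of_mem_nonZeroDivisors {x : R} (hx : x ∈ R⁰)
    {I J : Ideal R} : span {x} * I = span {x} * J ↔ I = J := by
  simp only [le_antisymm_iff, span_singleton_mul_right_mono_of_mem_nonZeroDivisors hx]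

theorem le_colon_iff_mul_le {I J K : Ideal R} : I ≤ K.colon J ↔ I * J ≤ K :=
  ⟨fun h => mul_le.2 fun _ ha _ hj => Submodule.mem_colon.1 (h ha) _ hj,
    fun h _ ha => Submodule.mem_colon.2 fun _ hj => h (mul_mem_mul ha hj)⟩

theorem pow_succ_eq_span_singleton_pow_mul {M : Ideal R} {x : R}
    (hM : M ^ 2 = span {x} * M) (l : ℕ) : M ^ (l + 1) = span {x} ^ l * M := by
  induction l with
  | zero => simp
  | succ l ih =>
    calc M ^ (l + 2) = M ^ (l + 1) * M := pow_succ _ _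
      _ = span {x} ^ l * M ^ 2 := by rw [ih]; ring
      _ = span {x} ^ (l + 1) * M := by rw [hM]; ring

theorem mul_eq_span_singleton_mul_of_pow_mul_eq {M J : Ideal R} {x y : R} (hx : x ∈ R⁰)
    (hM : M ^ 2 = span {x} * M) {n : ℕ} (h : M ^ n * J = span {y} * M ^ n) :
    M * J = span {y} * M := by
  rcases n with _ | l
  · rw [pow_zero, one_mul, mul_one] at h
    rw [h, mul_comm]
  · rw [pow_succ_eq_span_singleton_pow_mul hM, span_singleton_pow] at h
    rw [← span_singleton_mul_right_inj_of_mem_nonZeroDivisors (pow_mem hx l)]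
    calc span {x ^ l} * (M * J) = span {x ^ l} * M * J := by ring
      _ = span {y} * (span {x ^ l} * M) := h
      _ = span {x ^ l} * (span {y} * M) := by ring

theorem pow_mul_eq_span_singleton_mul_pow {T I J : Ideal R} {y : R} (hy : y ∈ R⁰)
    (hTIJ : span {y} * T = I * J) {n : ℕ} (hred : span {y} * J ^ n = J ^ (n + 1)) :
    T ^ n * J = span {y} * T ^ n := by
  rw [← span_singleton_mul_right_inj_of_mem_nonZeroDivisors (pow_mem hy n), ← span_singleton_pow]
  calc span {y} ^ n * (T ^ n * J) = (span {y} * T) ^ n * J := by ring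
    _ = I ^ n * J ^ (n + 1) := by rw [hTIJ]; ring
    _ = span {y} * (I * J) ^ n := by rw [← hred]; ring
    _ = span {y} ^ n * (span {y} * T ^ n) := by rw [← hTIJ]; ring

end Ideal

section TraceIdeal

variable {R : Type*} [CommRing R] {J : Ideal R} {y : R}

open Ideal

theorem LinearMap.mul_apply_eq_apply_mul (f : J →ₗ[R] R) (hyJ : y ∈ J) (a : J) :
    y * f a = f ⟨y, hyJ⟩ * a := by
  have hya : y • a = (a : R) • (⟨y, hyJ⟩ : J) := Subtype.ext (mul_comm y a)
  simpa only [map_smul, smul_eq_mul, mul_comm _ (a : R)] using congrArg f hya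

theorem LinearMap.apply_mem_colon (f : J →ₗ[R] R) (hyJ : y ∈ J) :
    f ⟨y, hyJ⟩ ∈ (span {y}).colon J :=
  Submodule.mem_colon.2 fun j hj => by
    rw [smul_eq_mul, ← f.mul_apply_eq_apply_mul hyJ ⟨j, hj⟩]
    exact mul_mem_right _ _ (mem_span_singleton_self y)

theorem exists_linearMap_mul_apply_eq_of_mem_colon (hy : y ∈ R⁰) {a : R}
    (ha : a ∈ (span {y}).colon J) : ∃ f : J →ₗ[R] R, ∀ j : J, y * f j = a * j := by
  have hinj : Function.Injective (LinearMap.toSpanSingleton R R y) := fun r s hrs =>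
    (mul_cancel_right_mem_nonZeroDivisors hy).1 hrs
  let g : J →ₗ[R] LinearMap.range (LinearMap.toSpanSingleton R R y) :=
    LinearMap.codRestrict _ (a • J.subtype) fun j => by
      rw [LinearMap.range_toSpanSingleton]
      exact Submodule.mem_colon.1 ha j j.2
  refine ⟨(LinearEquiv.ofInjective _ hinj).symm.toLinearMap ∘ₗ g, fun j => ?_⟩
  have := congrArg Subtype.val ((LinearEquiv.ofInjective _ hinj).apply_symm_apply (g j))
  rw [LinearEquiv.ofInjective_apply, LinearMap.toSpanSingleton_apply, smul_eq_mul] at this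
  rw [mul_comm]
  simpa [g] using this

theorem span_singleton_mul_traceIdeal (hyJ : y ∈ J) (hy : y ∈ R⁰) :
    span {y} * traceIdeal R J = (span {y}).colon J * J := by
  apply le_antisymm
  · rw [traceIdeal, mul_iSup]
    refine iSup_le fun f => span_singleton_mul_le_iff.2 ?_
    rintro _ ⟨a, rfl⟩
    rw [f.mul_apply_eq_apply_mul hyJ]
    exact mul_mem_mul (f.apply_mem_colon hyJ) a.2
  · refine mul_le.2 fun a ha j hj => ?_
    obtain ⟨f, hf⟩ := exists_linearMap_mul_apply_eq_of_mem_colon hy ha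
    rw [← hf ⟨j, hj⟩]
    exact mul_mem_mul (mem_span_singleton_self y)
      (Submodule.mem_iSup_of_mem f ⟨⟨j, hj⟩, rfl⟩)

end TraceIdeal

theorem colon_supset_iff_trace_supset_general (R : Type*) [CommRing R] [IsLocalRing R]
    (hmin : ∃ x ∈ maximalIdeal R, x ∈ R⁰ ∧
      (maximalIdeal R) ^ 2 = Ideal.span {x} * maximalIdeal R)
    (J : Ideal R)
    (y : R) (hyJ : y ∈ J) (hy : y ∈ R⁰)
    (hred : ∃ n : ℕ, Ideal.span {y} * J ^ n = J ^ (n + 1)) :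
    maximalIdeal R ≤ (Ideal.span {y}).colon J ↔ maximalIdeal R ≤ traceIdeal R J := by
  obtain ⟨x, -, hx, hm⟩ := hmin
  obtain ⟨n, hn⟩ := hred
  have htr := span_singleton_mul_traceIdeal hyJ hy
  constructor
  · intro h
    rw [← Ideal.span_singleton_mul_right_mono_of_mem_nonZeroDivisors hy, htr]
    exact (Ideal.mul_mono ((Ideal.span_singleton_le_iff_mem J).2 hyJ) h).trans_eq (mul_comm _ _)
  · intro h
    have hpow := Ideal.pow_mul_eq_span_singleton_mul_pow hy htr hn
    have hmJ : maximalIdeal R * J = Ideal.span {y} * maximalIdeal R := by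
      rcases eq_or_ne (traceIdeal R J) ⊤ with htop | hne
      · rw [htop, Ideal.top_pow, Ideal.top_mul, Ideal.mul_top] at hpow
        rw [hpow, mul_comm]
      · rw [le_antisymm (le_maximalIdeal hne) h] at hpow
        exact Ideal.mul_eq_span_singleton_mul_of_pow_mul_eq hx hm hpow
    exact Ideal.le_colon_iff_mul_le.2 (hmJ.trans_le Ideal.mul_le_left)

/-- Let `(R,m)` be a one-dimensional Cohen–Macaulay local ring of minimal
multiplicity (so `m² = xm` for some nonzerodivisor `x`) and `J` a regular
ideal with principal reduction `(y)`.  Then `(y):J ⊇ m` iff `tr(J) ⊇ m`. -/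
theorem colon_supset_iff_trace_supset (R : Type*) [CommRing R] [IsLocalRing R]
    [IsNoetherianRing R]
    (hdim : ringKrullDim R = 1)
    (hmin : ∃ x ∈ maximalIdeal R, x ∈ R⁰ ∧
      (maximalIdeal R) ^ 2 = Ideal.span {x} * maximalIdeal R)
    (J : Ideal R) (hreg : ∃ x ∈ J, x ∈ R⁰)
    (y : R) (hyJ : y ∈ J) (hy : y ∈ R⁰)
    (hred : ∃ n : ℕ, Ideal.span {y} * J ^ n = J ^ (n + 1)) :
    maximalIdeal R ≤ (Ideal.span {y}).colon J ↔ maximalIdeal R ≤ traceIdeal R J :=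
  colon_supset_iff_trace_supset_general R hmin J y hyJ hy hred
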